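/- arXiv:1007.0673 — 3 statements merged into one kernel-verified Lean document; each statement's English description precedes it below -/
import Mathlib

section
/- Let m : ℕ → ℂ and let Φ = (φ_n), Ψ = (ψ_n) be sequences in a complex Hilbert space H. Suppose that for every f ∈ H the family (m_n ⟨f, ψ_n⟩ φ_n)_{n∈ℕ} is unconditionally summable, or that for every f ∈ H the family (m_n ⟨f, φ_n⟩ ψ_n)_{n∈ℕ} is unconditionally summable. If the sequence mΦ = (m_n φ_n) is norm-bounded below (inf_n ‖m_n φ_n‖ > 0), then Ψ is a Bessel sequence for H, i.e. there is B > 0 with ∑_n |⟨h, ψ_n⟩|² ≤ B‖h‖² for every h ∈ H. -/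
/-!
If `∑ Tₙ f` converges unconditionally for every `f`, the finite partial sums `∑_{n ∈ s} Tₙ`
are uniformly bounded by Banach–Steinhaus. In a Hilbert space, finite partial sums of `(yₙ)`
bounded by `D` force `∑ ‖yₙ‖² ≤ 4D²`: by the parallelogram law some choice of signs gives
`‖∑ ±yₙ‖² ≥ ∑ ‖yₙ‖²`. With `yₙ = ⟨h, ψₙ⟩ mₙφₙ` and `‖mₙφₙ‖ ≥ a` this is the Bessel bound.
The second hypothesis reduces to the first by taking adjoints: the adjoint of
`∑ mₙ ⟨·, φₙ⟩ ψₙ` is `∑ conj mₙ ⟨·, ψₙ⟩ φₙ`, of the same norm.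
-/

open Finset hiding sum_apply
open InnerProductSpace RCLike
open scoped InnerProductSpace ComplexConjugate

theorem Summable.exists_forall_norm_finset_sum_le {ι E : Type*} [SeminormedAddCommGroup E]
    {f : ι → E} (hf : Summable f) : ∃ R, ∀ s : Finset ι, ‖∑ i ∈ s, f i‖ ≤ R := by
  classical
  obtain ⟨t, ht⟩ := cauchySeq_finset_iff_vanishing_norm.1 hf.hasSum.cauchySeq 1 one_pos
  refine ⟨1 + ∑ i ∈ t, ‖f i‖, fun s => ?_⟩
  rw [← sum_sdiff (inter_subset_left (s₁ := s) (s₂ := t)), sdiff_inter_self_left]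
  calc ‖∑ i ∈ s \ t, f i + ∑ i ∈ s ∩ t, f i‖
      ≤ ‖∑ i ∈ s \ t, f i‖ + ∑ i ∈ s ∩ t, ‖f i‖ :=
        (norm_add_le _ _).trans (by gcongr; exact norm_sum_le _ _)
    _ ≤ 1 + ∑ i ∈ t, ‖f i‖ := by
      gcongr
      · exact (ht _ sdiff_disjoint).le
      · exact inter_subset_right

theorem exists_forall_norm_finset_sum_le_of_summable {𝕜 E F ι : Type*}
    [NontriviallyNormedField 𝕜] [NormedAddCommGroup E] [NormedSpace 𝕜 E] [CompleteSpace E]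
    [NormedAddCommGroup F] [NormedSpace 𝕜 F]
    {T : ι → E →L[𝕜] F} (hT : ∀ x, Summable fun i => T i x) :
    ∃ C, 0 < C ∧ ∀ s : Finset ι, ‖∑ i ∈ s, T i‖ ≤ C := by
  obtain ⟨C, hC⟩ := banach_steinhaus (g := fun s : Finset ι => ∑ i ∈ s, T i) fun x => by
    simpa only [sum_apply] using (hT x).exists_forall_norm_finset_sum_le
  exact ⟨max C 1, by positivity, fun s => (hC s).trans (le_max_left _ _)⟩

theorem exists_subset_sum_sq_norm_le (𝕜 : Type*) {E ι : Type*} [RCLike 𝕜] [NormedAddCommGroup E]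
    [InnerProductSpace 𝕜 E] [DecidableEq ι] (x : ι → E) (F : Finset ι) :
    ∃ A ⊆ F, ∑ i ∈ F, ‖x i‖ ^ 2 ≤ ‖∑ i ∈ A, x i - ∑ i ∈ F \ A, x i‖ ^ 2 := by
  induction F using Finset.induction_on with
  | empty => exact ⟨∅, subset_rfl, by simp⟩
  | @insert k F hk ih =>
    obtain ⟨A, hAF, hA⟩ := ih
    set S := ∑ i ∈ A, x i - ∑ i ∈ F \ A, x i
    have hkA : k ∉ A := fun h => hk (hAF h)
    rw [sum_insert hk]
    by_cases hre : 0 ≤ re ⟪S, x k⟫_𝕜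
    · refine ⟨insert k A, insert_subset_insert k hAF, ?_⟩
      rw [sum_insert hkA, insert_sdiff_insert, sdiff_insert_of_notMem hk, add_sub_assoc,
        add_comm (x k), norm_add_sq (𝕜 := 𝕜)]
      linarith
    · refine ⟨A, hAF.trans (subset_insert k F), ?_⟩
      rw [insert_sdiff_of_notMem _ hkA, sum_insert (fun h => hk (mem_sdiff.1 h).1),
        sub_add_eq_sub_sub_swap, norm_sub_sq (𝕜 := 𝕜)]
      linarith

theorem sum_sq_norm_le_of_forall_norm_finset_sum_le (𝕜 : Type*) {E ι : Type*} [RCLike 𝕜]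
    [NormedAddCommGroup E] [InnerProductSpace 𝕜 E] {x : ι → E} {D : ℝ}
    (hD : ∀ s : Finset ι, ‖∑ i ∈ s, x i‖ ≤ D) (F : Finset ι) :
    ∑ i ∈ F, ‖x i‖ ^ 2 ≤ (2 * D) ^ 2 := by
  classical
  obtain ⟨A, -, hA⟩ := exists_subset_sum_sq_norm_le 𝕜 x F
  refine hA.trans (pow_le_pow_left₀ (norm_nonneg _) ?_ 2)
  linarith [norm_sub_le (∑ i ∈ A, x i) (∑ i ∈ F \ A, x i), hD A, hD (F \ A)]

section Hilbert
variable {𝕜 E ι : Type*} [RCLike 𝕜] [NormedAddCommGroup E] [InnerProductSpace 𝕜 E]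

theorem norm_sum_rankOne_comm {F : Type*} [NormedAddCommGroup F] [InnerProductSpace 𝕜 F]
    [CompleteSpace E] [CompleteSpace F] (x : ι → E) (y : ι → F) (s : Finset ι) :
    ‖∑ i ∈ s, rankOne 𝕜 (x i) (y i)‖ = ‖∑ i ∈ s, rankOne 𝕜 (y i) (x i)‖ := by
  rw [← ContinuousLinearMap.adjoint.norm_map, map_sum]
  simp only [adjoint_rankOne]

theorem bessel_of_norm_finset_sum_rankOne_le {φ ψ : ι → E} {a C : ℝ} (ha : 0 < a)
    (hφ : ∀ i, a ≤ ‖φ i‖) (hC : ∀ s : Finset ι, ‖∑ i ∈ s, rankOne 𝕜 (φ i) (ψ i)‖ ≤ C) (h : E) :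
    Summable (fun i => ‖⟪ψ i, h⟫_𝕜‖ ^ 2) ∧
      ∑' i, ‖⟪ψ i, h⟫_𝕜‖ ^ 2 ≤ (2 * C / a) ^ 2 * ‖h‖ ^ 2 := by
  have hsyn : ∀ s : Finset ι, ‖∑ i ∈ s, ⟪ψ i, h⟫_𝕜 • φ i‖ ≤ C * ‖h‖ := fun s => by
    simpa only [sum_apply, rankOne_apply] using
      (∑ i ∈ s, rankOne 𝕜 (φ i) (ψ i)).le_of_opNorm_le (hC s) h
  have hcoef : ∀ i, a ^ 2 * ‖⟪ψ i, h⟫_𝕜‖ ^ 2 ≤ ‖⟪ψ i, h⟫_𝕜 • φ i‖ ^ 2 := fun i => by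
    rw [norm_smul, mul_pow, mul_comm]
    gcongr
    exact hφ i
  have hpartial : ∀ F : Finset ι, ∑ i ∈ F, ‖⟪ψ i, h⟫_𝕜‖ ^ 2 ≤ (2 * C / a) ^ 2 * ‖h‖ ^ 2 := by
    intro F
    have := (sum_le_sum fun i _ => hcoef i).trans
      (sum_sq_norm_le_of_forall_norm_finset_sum_le 𝕜 hsyn F)
    rw [← mul_sum] at this
    rw [div_pow, div_mul_eq_mul_div, le_div_iff₀ (by positivity)]
    nlinarith
  exact ⟨summable_of_sum_le (fun i => by positivity) hpartial,
    Real.tsum_le_of_sum_le (fun i => by positivity) hpartial⟩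

end Hilbert

/-- If M_{m,Φ,Ψ} or M_{m,Ψ,Φ} is unconditionally convergent on H and mΦ is
norm-bounded below, then Ψ is a Bessel sequence for H. -/
theorem stmt_2
    {H : Type*} [NormedAddCommGroup H] [InnerProductSpace ℂ H] [CompleteSpace H]
    (φ ψ : ℕ → H) (m : ℕ → ℂ)
    (hconv : (∀ f : H, Summable (fun n => (m n * (inner ℂ (ψ n) f : ℂ)) • φ n)) ∨
             (∀ f : H, Summable (fun n => (m n * (inner ℂ (φ n) f : ℂ)) • ψ n)))
    (hNBB : ∃ a : ℝ, 0 < a ∧ ∀ n, a ≤ ‖m n • φ n‖) :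
    ∃ B : ℝ, 0 < B ∧ ∀ h : H,
      Summable (fun n => ‖(inner ℂ (ψ n) h : ℂ)‖ ^ 2) ∧
      ∑' n, ‖(inner ℂ (ψ n) h : ℂ)‖ ^ 2 ≤ B * ‖h‖ ^ 2 := by
  obtain ⟨a, ha, hmφ⟩ := hNBB
  rcases hconv with hsum | hsum
  · obtain ⟨C, hC, hT⟩ := exists_forall_norm_finset_sum_le_of_summable
      (T := fun n => rankOne ℂ (m n • φ n) (ψ n)) fun f => by
        simpa only [rankOne_apply, smul_smul, mul_comm] using hsum f
    exact ⟨_, by positivity, bessel_of_norm_finset_sum_rankOne_le ha hmφ hT⟩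
  · obtain ⟨C, hC, hT⟩ := exists_forall_norm_finset_sum_le_of_summable
      (T := fun n => rankOne ℂ (ψ n) (conj (m n) • φ n)) fun f => by
        simpa only [rankOne_apply, inner_smul_left, RCLike.conj_conj] using hsum f
    refine ⟨_, by positivity, bessel_of_norm_finset_sum_rankOne_le ha (fun n => ?_)
      fun s => (norm_sum_rankOne_comm _ _ s).trans_le (hT s)⟩
    simpa only [norm_smul, RCLike.norm_conj] using hmφ n
end

section
/- Let Φ = (φ_n) be a Riesz basis for a complex Hilbert space H, let Ψ = (ψ_n) be a sequence in H and m : ℕ → ℂ, and assume the multiplier M_{m,Φ,Ψ} is well defined on H (for every f ∈ H the partial sums ∑_{n<N} m_n ⟨f, ψ_n⟩ φ_n converge in H). Then the operator M_{m,Φ,Ψ} : f ↦ ∑_n m_n ⟨f, ψ_n⟩ φ_n is invertible on H (a bounded linear bijection of H onto H) if and only if the sequence mΨ = (m_n ψ_n) is a Riesz basis for H. -/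
open Filter

/-- A sequence is a Riesz basis for H with some bounds A, B > 0. -/
def IsRieszBasis {H : Type*} [NormedAddCommGroup H] [InnerProductSpace ℂ H] (φ : ℕ → H) : Prop :=
  Dense (Submodule.span ℂ (Set.range φ) : Set H) ∧
  ∃ A B : ℝ, 0 < A ∧ 0 < B ∧ ∀ c : ℕ → ℂ, Summable (fun n => ‖c n‖ ^ 2) →
    Summable (fun n => c n • φ n) ∧
    A * ∑' n, ‖c n‖ ^ 2 ≤ ‖∑' n, c n • φ n‖ ^ 2 ∧
    ‖∑' n, c n • φ n‖ ^ 2 ≤ B * ∑' n, ‖c n‖ ^ 2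

/-!
A sequence `x` is a Riesz basis exactly when its synthesis operator `c ↦ ∑ cₙ xₙ` is a bounded
bijection `ℓ² → H`, equivalently when its adjoint, the analysis operator `f ↦ (⟪xₙ, f⟫)ₙ`, is a
bounded bijection `H → ℓ²`. If the partial sums of `∑ cₙ φₙ` converge, the lower Riesz bound of `Φ`
puts `c` in `ℓ²`; so with `W` the synthesis operator of `Φ`, the multiplier factors as `W ∘ U`
where `U f = (mₙ ⟪ψₙ, f⟫)ₙ` is the analysis operator of `(conj mₙ ψₙ)`. Hence the multiplier is
invertible iff `(conj mₙ ψₙ)` is a Riesz basis, and multiplying the terms of a Riesz basis by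
unimodular scalars yields a Riesz basis.
-/

open Topology
open scoped lp InnerProductSpace InnerProduct ComplexConjugate

section lp

variable {ι : Type*} {E : ι → Type*} [∀ i, NormedAddCommGroup (E i)]

theorem memℓp_two_iff_summable_sq {f : ∀ i, E i} :
    Memℓp f 2 ↔ Summable fun i => ‖f i‖ ^ 2 := by
  rw [memℓp_gen_iff (by norm_num)]
  norm_num

theorem lp.norm_sq_eq_tsum (f : lp E 2) : ‖f‖ ^ 2 = ∑' i, ‖f i‖ ^ 2 := by
  simpa using lp.norm_rpow_eq_tsum (p := 2) (by norm_num) f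

end lp

section Adjoint

variable {𝕜 E F : Type*} [RCLike 𝕜] [NormedAddCommGroup E] [InnerProductSpace 𝕜 E]
  [CompleteSpace E] [NormedAddCommGroup F] [InnerProductSpace 𝕜 F] [CompleteSpace F]

theorem ContinuousLinearMap.bijective_adjoint {A : E →L[𝕜] F} (hA : Function.Bijective A) :
    Function.Bijective (A†) := by
  let e := ContinuousLinearEquiv.ofBijective A (LinearMap.ker_eq_bot.mpr hA.1)
    (LinearMap.range_eq_top.mpr hA.2)
  have he : (e : E →L[𝕜] F) = A := ContinuousLinearEquiv.coe_ofBijective ..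
  refine Function.bijective_iff_has_inverse.2 ⟨(e.symm : F →L[𝕜] E)†, fun y => ?_, fun x => ?_⟩
  · rw [← comp_apply, ← adjoint_comp, ← he, e.coe_comp_coe_symm, adjoint_id, id_apply]
  · rw [← comp_apply, ← adjoint_comp, ← he, e.coe_symm_comp_coe, adjoint_id, id_apply]

end Adjoint

theorem AntilipschitzWith.bijective_of_denseRange {α β : Type*} [EMetricSpace α] [EMetricSpace β]
    [CompleteSpace α] {K : NNReal} {f : α → β} (hf : AntilipschitzWith K f)
    (hfc : UniformContinuous f) (hd : DenseRange f) : Function.Bijective f :=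
  ⟨hf.injective, fun y => by
    rw [← Set.mem_range, ← (hf.isClosed_range hfc).closure_eq, hd.closure_range]
    trivial⟩

theorem exists_norm_eq_one_mul_of_norm_eq {𝕜 : Type*} [NormedField 𝕜] {a b : 𝕜}
    (h : ‖a‖ = ‖b‖) : ∃ u : 𝕜, ‖u‖ = 1 ∧ b = u * a := by
  rcases eq_or_ne a 0 with rfl | ha
  · exact ⟨1, norm_one, by simpa [eq_comm] using h⟩
  · refine ⟨b / a, ?_, (div_mul_cancel₀ b ha).symm⟩
    rw [norm_div, ← h, div_self (norm_ne_zero_iff.2 ha)]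

section Riesz

variable {H : Type*} [NormedAddCommGroup H] [InnerProductSpace ℂ H]

theorem hasSum_smul_of_apply_single {x : ℕ → H} {W : ℓ²(ℕ, ℂ) →L[ℂ] H}
    (hW : ∀ n, W (lp.single 2 n 1) = x n) (c : ℓ²(ℕ, ℂ)) :
    HasSum (fun n => c n • x n) (W c) := by
  have hsingle : ∀ n, W (lp.single 2 n (c n)) = c n • x n := fun n => by
    rw [← hW, ← map_smul, ← lp.single_smul, smul_eq_mul, mul_one]
  simpa only [hsingle] using (lp.hasSum_single ENNReal.ofNat_ne_top c).mapL W

theorem apply_single_of_hasSum {x : ℕ → H} {W : ℓ²(ℕ, ℂ) →L[ℂ] H}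
    (hW : ∀ c : ℓ²(ℕ, ℂ), HasSum (fun n => c n • x n) (W c)) (n : ℕ) :
    W (lp.single 2 n 1) = x n := by
  refine (hW _).unique ?_
  have hsupp : ∀ k ≠ n, (lp.single 2 n 1 : ℓ²(ℕ, ℂ)) k • x k = 0 := fun k hk => by
    rw [lp.single_apply_ne _ _ _ hk, zero_smul]
  simpa using hasSum_single n hsupp

theorem ContinuousLinearMap.adjoint_apply_apply_eq_inner [CompleteSpace H]
    (W : ℓ²(ℕ, ℂ) →L[ℂ] H) (f : H) (n : ℕ) :
    (W† : H →L[ℂ] ℓ²(ℕ, ℂ)) f n = ⟪W (lp.single 2 n 1), f⟫_ℂ := by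
  rw [← adjoint_inner_right, lp.inner_single_left]
  simp

theorem IsRieszBasis.exists_bounds_lp {x : ℕ → H} (hx : IsRieszBasis x) :
    ∃ A B : ℝ, 0 < A ∧ 0 < B ∧ ∀ c : ℓ²(ℕ, ℂ), Summable (fun n => c n • x n) ∧
      A * ‖c‖ ^ 2 ≤ ‖∑' n, c n • x n‖ ^ 2 ∧ ‖∑' n, c n • x n‖ ^ 2 ≤ B * ‖c‖ ^ 2 := by
  obtain ⟨-, A, B, hA, hB, hbd⟩ := hx
  refine ⟨A, B, hA, hB, fun c => ?_⟩
  simpa only [lp.norm_sq_eq_tsum] using hbd c (memℓp_two_iff_summable_sq.1 (lp.memℓp c))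

theorem IsRieszBasis.exists_synthesis [CompleteSpace H] {x : ℕ → H} (hx : IsRieszBasis x) :
    ∃ W : ℓ²(ℕ, ℂ) →L[ℂ] H,
      (∀ c : ℓ²(ℕ, ℂ), HasSum (fun n => c n • x n) (W c)) ∧ Function.Bijective W := by
  obtain ⟨A, B, hA, hB, hbd⟩ := hx.exists_bounds_lp
  let W₀ : ℓ²(ℕ, ℂ) →ₗ[ℂ] H :=
    { toFun c := ∑' n, c n • x n
      map_add' c d := by
        rw [← (hbd c).1.tsum_add (hbd d).1]
        exact tsum_congr fun n => by simp [add_smul]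
      map_smul' a c := by
        rw [RingHom.id_apply, ← (hbd c).1.tsum_const_smul a]
        exact tsum_congr fun n => by simp [smul_smul] }
  have hupper : ∀ c, ‖W₀ c‖ ≤ √B * ‖c‖ := fun c =>
    (sq_le_sq₀ (norm_nonneg _) (by positivity)).1 <| by
      rw [mul_pow, Real.sq_sqrt hB.le]
      exact (hbd c).2.2
  let W := W₀.mkContinuous √B hupper
  have hsum : ∀ c, HasSum (fun n => c n • x n) (W c) := fun c => (hbd c).1.hasSum
  have hlower : ∀ c, ‖c‖ ≤ (Real.toNNReal (√A)⁻¹ : ℝ) * ‖W c‖ := fun c => by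
    have h : √A * ‖c‖ ≤ ‖W c‖ := (sq_le_sq₀ (by positivity) (norm_nonneg _)).1 <| by
      rw [mul_pow, Real.sq_sqrt hA.le]
      exact (hbd c).2.1
    rw [Real.coe_toNNReal _ (by positivity), inv_mul_eq_div, le_div_iff₀ (by positivity),
      mul_comm]
    exact h
  have hspan : Submodule.span ℂ (Set.range x) ≤ LinearMap.range (W : ℓ²(ℕ, ℂ) →ₗ[ℂ] H) :=
    Submodule.span_le.2 <| by
      rintro _ ⟨n, rfl⟩
      exact ⟨lp.single 2 n 1, apply_single_of_hasSum hsum n⟩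
  exact ⟨W, hsum, (W.antilipschitz_of_bound hlower).bijective_of_denseRange
    W.uniformContinuous (hx.1.mono (SetLike.coe_subset_coe.2 hspan))⟩

theorem IsRieszBasis.of_synthesis [CompleteSpace H] {x : ℕ → H} {W : ℓ²(ℕ, ℂ) →L[ℂ] H}
    (hW : ∀ c : ℓ²(ℕ, ℂ), HasSum (fun n => c n • x n) (W c)) (hWb : Function.Bijective W) :
    IsRieszBasis x := by
  let e := ContinuousLinearEquiv.ofBijective W (LinearMap.ker_eq_bot.mpr hWb.1)
    (LinearMap.range_eq_top.mpr hWb.2)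
  obtain ⟨B, hB, hWB⟩ := W.bound
  obtain ⟨K, hK, hKe⟩ := (e.symm : H →L[ℂ] ℓ²(ℕ, ℂ)).bound
  refine ⟨fun f => ?_, K⁻¹ ^ 2, B ^ 2, by positivity, by positivity, fun c hc => ?_⟩
  · obtain ⟨c, rfl⟩ := hWb.2 f
    exact mem_closure_of_tendsto (hW c).tendsto_sum_nat <| Eventually.of_forall fun N =>
      Submodule.sum_mem _ fun n _ => Submodule.smul_mem _ _ (Submodule.subset_span ⟨n, rfl⟩)
  let c' : ℓ²(ℕ, ℂ) := ⟨c, memℓp_two_iff_summable_sq.2 hc⟩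
  have hnorm : ∑' n, ‖c n‖ ^ 2 = ‖c'‖ ^ 2 := (lp.norm_sq_eq_tsum c').symm
  rw [hnorm, (hW c').tsum_eq]
  refine ⟨(hW c').summable, ?_, ?_⟩
  · have h : K⁻¹ * ‖c'‖ ≤ ‖W c'‖ := by
      rw [inv_mul_le_iff₀ hK]
      simpa [e] using hKe (W c')
    rw [← mul_pow]
    exact pow_le_pow_left₀ (by positivity) h 2
  · rw [← mul_pow]
    exact pow_le_pow_left₀ (norm_nonneg _) (hWB c') 2

theorem IsRieszBasis.smul_of_norm_eq_one {x : ℕ → H} {u : ℕ → ℂ} (hx : IsRieszBasis x)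
    (hu : ∀ n, ‖u n‖ = 1) : IsRieszBasis fun n => u n • x n := by
  obtain ⟨hd, A, B, hA, hB, hbd⟩ := hx
  refine ⟨hd.mono (SetLike.coe_subset_coe.2 (Submodule.span_le.2 ?_)), A, B, hA, hB,
    fun c hc => ?_⟩
  · rintro _ ⟨n, rfl⟩
    have hu0 : u n ≠ 0 := norm_ne_zero_iff.1 (by rw [hu n]; exact one_ne_zero)
    rw [← inv_smul_smul₀ hu0 (x n)]
    exact Submodule.smul_mem _ _ (Submodule.subset_span ⟨n, rfl⟩)
  · have hnorm : ∀ n, ‖c n * u n‖ = ‖c n‖ := by simp [hu]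
    have hterm : ∀ n, (c n * u n) • x n = c n • u n • x n := fun n => mul_smul _ _ _
    simpa only [hnorm, hterm] using hbd (fun n => c n * u n) (by simpa only [hnorm] using hc)

theorem isRieszBasis_smul_iff_of_norm_eq {x : ℕ → H} {a b : ℕ → ℂ}
    (h : ∀ n, ‖a n‖ = ‖b n‖) :
    IsRieszBasis (fun n => a n • x n) ↔ IsRieszBasis (fun n => b n • x n) := by
  suffices ∀ a b : ℕ → ℂ, (∀ n, ‖a n‖ = ‖b n‖) →
      IsRieszBasis (fun n => a n • x n) → IsRieszBasis (fun n => b n • x n) from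
    ⟨this a b h, this b a fun n => (h n).symm⟩
  intro a b h hx
  choose u hu hba using fun n => exists_norm_eq_one_mul_of_norm_eq (h n)
  simpa only [hba, mul_smul] using hx.smul_of_norm_eq_one hu

theorem isRieszBasis_iff_exists_analysis [CompleteSpace H] {x : ℕ → H} :
    IsRieszBasis x ↔ ∃ U : H →L[ℂ] ℓ²(ℕ, ℂ),
      (∀ f n, U f n = ⟪x n, f⟫_ℂ) ∧ Function.Bijective U := by
  constructor
  · intro hx
    obtain ⟨W, hW, hWb⟩ := hx.exists_synthesis
    exact ⟨W†, fun f n => by rw [W.adjoint_apply_apply_eq_inner, apply_single_of_hasSum hW],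
      ContinuousLinearMap.bijective_adjoint hWb⟩
  · rintro ⟨U, hU, hUb⟩
    have hsingle : ∀ n, (U†) (lp.single 2 n 1) = x n := fun n => ext_inner_right ℂ fun f => by
      rw [← (U†).adjoint_apply_apply_eq_inner, ContinuousLinearMap.adjoint_adjoint, hU]
    exact .of_synthesis (hasSum_smul_of_apply_single hsingle)
      (ContinuousLinearMap.bijective_adjoint hUb)

theorem IsRieszBasis.exists_lower_bound_sum {x : ℕ → H} (hx : IsRieszBasis x) :
    ∃ A : ℝ, 0 < A ∧ ∀ (c : ℕ → ℂ) (s : Finset ℕ),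
      A * ∑ n ∈ s, ‖c n‖ ^ 2 ≤ ‖∑ n ∈ s, c n • x n‖ ^ 2 := by
  obtain ⟨-, A, _, hA, -, hbd⟩ := hx
  refine ⟨A, hA, fun c s => ?_⟩
  set d := (s : Set ℕ).indicator c
  have hd : ∀ n ∈ s, d n = c n := fun n hn => Set.indicator_of_mem (Finset.mem_coe.2 hn) c
  have hsq : ∀ n ∉ s, ‖d n‖ ^ 2 = 0 := fun n hn => by simp [d, hn]
  have hterm : ∀ n ∉ s, d n • x n = 0 := fun n hn => by simp [d, hn]
  have h := (hbd d (summable_of_ne_finset_zero hsq)).2.1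
  have hsq_sum : ∑ n ∈ s, ‖d n‖ ^ 2 = ∑ n ∈ s, ‖c n‖ ^ 2 :=
    Finset.sum_congr rfl fun n hn => by rw [hd n hn]
  have hterm_sum : ∑ n ∈ s, d n • x n = ∑ n ∈ s, c n • x n :=
    Finset.sum_congr rfl fun n hn => by rw [hd n hn]
  rwa [tsum_eq_sum hsq, tsum_eq_sum hterm, hsq_sum, hterm_sum] at h

theorem IsRieszBasis.memℓp_of_tendsto {x : ℕ → H} {c : ℕ → ℂ} {g : H} (hx : IsRieszBasis x)
    (h : Tendsto (fun N => ∑ n ∈ Finset.range N, c n • x n) atTop (𝓝 g)) : Memℓp c 2 := by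
  obtain ⟨A, hA, hlower⟩ := hx.exists_lower_bound_sum
  obtain ⟨C, hC⟩ := h.norm.bddAbove_range
  refine memℓp_two_iff_summable_sq.2 <|
    summable_of_sum_range_le (c := C ^ 2 / A) (fun n => by positivity) fun N => ?_
  rw [le_div_iff₀ hA, mul_comm]
  exact (hlower c _).trans (pow_le_pow_left₀ (norm_nonneg _) (hC ⟨N, rfl⟩) 2)

theorem IsRieszBasis.exists_bijective_tendsto_iff [CompleteSpace H] {x : ℕ → H}
    (hx : IsRieszBasis x) (a : H → ℕ → ℂ) :
    (∃ T : H →L[ℂ] H,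
      (∀ f, Tendsto (fun N => ∑ n ∈ Finset.range N, a f n • x n) atTop (𝓝 (T f))) ∧
        Function.Bijective T) ↔
      ∃ U : H →L[ℂ] ℓ²(ℕ, ℂ), (∀ f n, U f n = a f n) ∧ Function.Bijective U := by
  obtain ⟨W, hW, hWb⟩ := hx.exists_synthesis
  let e := ContinuousLinearEquiv.ofBijective W (LinearMap.ker_eq_bot.mpr hWb.1)
    (LinearMap.range_eq_top.mpr hWb.2)
  constructor
  · rintro ⟨T, hT, hTb⟩
    refine ⟨(e.symm : H →L[ℂ] ℓ²(ℕ, ℂ)) ∘L T, fun f n => ?_, e.symm.bijective.comp hTb⟩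
    let c : ℓ²(ℕ, ℂ) := ⟨a f, hx.memℓp_of_tendsto (hT f)⟩
    have hc : W c = T f := tendsto_nhds_unique (hW c).tendsto_sum_nat (hT f)
    rw [ContinuousLinearMap.comp_apply, ← hc, ContinuousLinearEquiv.coe_coe,
      ContinuousLinearEquiv.ofBijective_symm_apply_apply]
  · rintro ⟨U, hU, hUb⟩
    refine ⟨W ∘L U, fun f => ?_, hWb.comp hUb⟩
    simpa only [hU, ContinuousLinearMap.comp_apply] using (hW (U f)).tendsto_sum_nat

end Riesz

theorem stmt_8_general
    {H : Type*} [NormedAddCommGroup H] [InnerProductSpace ℂ H] [CompleteSpace H]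
    (φ ψ : ℕ → H) (m : ℕ → ℂ)
    (hΦ : IsRieszBasis φ) :
    (∃ T : H →L[ℂ] H,
      (∀ f : H, Tendsto
        (fun N => ∑ n ∈ Finset.range N, (m n * (inner ℂ (ψ n) f : ℂ)) • φ n)
        atTop (nhds (T f))) ∧
      Function.Bijective T) ↔
    IsRieszBasis (fun n => m n • ψ n) := by
  have hcoef : ∀ f n, m n * ⟪ψ n, f⟫_ℂ = ⟪conj (m n) • ψ n, f⟫_ℂ := fun f n => by
    rw [inner_smul_left, starRingEnd_self_apply]
  rw [hΦ.exists_bijective_tendsto_iff fun f n => m n * ⟪ψ n, f⟫_ℂ]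
  simp only [hcoef]
  rw [← isRieszBasis_iff_exists_analysis]
  exact isRieszBasis_smul_iff_of_norm_eq fun n => RCLike.norm_conj _

/-- If Φ is a Riesz basis and M_{m,Φ,Ψ} is well defined on H, then M_{m,Φ,Ψ}
is invertible on H (a bounded linear bijection of H onto H) iff mΨ is a Riesz basis. -/
theorem stmt_8
    {H : Type*} [NormedAddCommGroup H] [InnerProductSpace ℂ H] [CompleteSpace H]
    (φ ψ : ℕ → H) (m : ℕ → ℂ)
    (hΦ : IsRieszBasis φ)
    (hwd : ∀ f : H, ∃ g : H, Tendsto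
      (fun N => ∑ n ∈ Finset.range N, (m n * (inner ℂ (ψ n) f : ℂ)) • φ n)
      atTop (nhds g)) :
    (∃ T : H →L[ℂ] H,
      (∀ f : H, Tendsto
        (fun N => ∑ n ∈ Finset.range N, (m n * (inner ℂ (ψ n) f : ℂ)) • φ n)
        atTop (nhds (T f))) ∧
      Function.Bijective T) ↔
    IsRieszBasis (fun n => m n • ψ n) :=
  stmt_8_general φ ψ m hΦ
end

section
/- Let Φ = (φ_n) be a Riesz basis for a complex Hilbert space H, let Ψ = (ψ_n) be an overcomplete frame for H (a frame which is not a Riesz basis), and let m : ℕ → ℂ be semi-normalized. Then the bounded operator M_{m,Φ,Ψ} : f ↦ ∑_n m_n ⟨f, ψ_n⟩ φ_n (the series converging unconditionally for every f ∈ H) is injective but not surjective. -/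
/-- Frame for H with some bounds A, B > 0. -/
def IsFrame {H : Type*} [NormedAddCommGroup H] [InnerProductSpace ℂ H] (φ : ℕ → H) : Prop :=
  ∃ A B : ℝ, 0 < A ∧ 0 < B ∧ ∀ h : H,
    Summable (fun n => ‖(inner ℂ (φ n) h : ℂ)‖ ^ 2) ∧
    A * ‖h‖ ^ 2 ≤ ∑' n, ‖(inner ℂ (φ n) h : ℂ)‖ ^ 2 ∧
    ∑' n, ‖(inner ℂ (φ n) h : ℂ)‖ ^ 2 ≤ B * ‖h‖ ^ 2

/-!
Through its synthesis map `c ↦ ∑ cₙ φₙ`, which is injective on `ℓ²` by the lower Riesz bound,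
the Riesz basis `Φ` reduces `M_{m,Φ,Ψ}` to the analysis map `f ↦ (⟨f, ψₙ⟩)ₙ` of `Ψ` composed with
the invertible diagonal `m`. The lower frame bound makes the analysis map injective. If it were
onto `ℓ²`, then for `c = (⟨f, ψₙ⟩)ₙ` we would have `∑ |cₙ|² = ⟨f, ∑ cₙ ψₙ⟩ ≤ ‖f‖ ‖∑ cₙ ψₙ‖` and
`A ‖f‖² ≤ ∑ |cₙ|²`, hence the lower Riesz bound `A ∑ |cₙ|² ≤ ‖∑ cₙ ψₙ‖²`; together with the
Bessel bound and the density of the span this would make `Ψ` a Riesz basis.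
-/

open Finset Filter
open scoped InnerProductSpace

lemma le_of_sq_le_mul {x C : ℝ} (hC : 0 ≤ C) (h : x ^ 2 ≤ C * x) : x ≤ C := by
  nlinarith

section SquareSummable

variable {ι : Type*} {a b : ι → ℂ}

lemma Summable.sq_norm_mul_of_norm_le {C : ℝ} (ha : ∀ i, ‖a i‖ ≤ C)
    (hb : Summable fun i => ‖b i‖ ^ 2) : Summable fun i => ‖a i * b i‖ ^ 2 :=
  (hb.mul_left (C ^ 2)).of_nonneg_of_le (fun _ => sq_nonneg _) fun i => by
    rw [norm_mul, mul_pow]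
    exact mul_le_mul_of_nonneg_right (pow_le_pow_left₀ (norm_nonneg _) (ha i) 2) (sq_nonneg _)

lemma Summable.sq_norm_sub (ha : Summable fun i => ‖a i‖ ^ 2)
    (hb : Summable fun i => ‖b i‖ ^ 2) : Summable fun i => ‖a i - b i‖ ^ 2 :=
  ((ha.add hb).mul_left 2).of_nonneg_of_le (fun _ => sq_nonneg _) fun _ =>
    (pow_le_pow_left₀ (norm_nonneg _) (norm_sub_le _ _) 2).trans add_sq_le

end SquareSummable

section Frames

variable {H : Type*} [NormedAddCommGroup H] [InnerProductSpace ℂ H]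

def IsBesselWith (ψ : ℕ → H) (B : ℝ) : Prop :=
  ∀ h : H, Summable (fun n => ‖⟪ψ n, h⟫_ℂ‖ ^ 2) ∧ ∑' n, ‖⟪ψ n, h⟫_ℂ‖ ^ 2 ≤ B * ‖h‖ ^ 2

namespace IsBesselWith

variable {ψ : ℕ → H} {B : ℝ}

lemma norm_sum_smul_sq_le (hψ : IsBesselWith ψ B) (hB : 0 ≤ B) (c : ℕ → ℂ) (s : Finset ℕ) :
    ‖∑ n ∈ s, c n • ψ n‖ ^ 2 ≤ B * ∑ n ∈ s, ‖c n‖ ^ 2 := by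
  set v := ∑ n ∈ s, c n • ψ n
  have h_self : ‖v‖ ^ 2 ≤ ∑ n ∈ s, ‖c n‖ * ‖⟪ψ n, v⟫_ℂ‖ := calc
    ‖v‖ ^ 2 = ‖⟪v, v⟫_ℂ‖ := by
      rw [inner_self_eq_norm_sq_to_K, norm_pow, RCLike.norm_ofReal, abs_norm]
    _ = ‖∑ n ∈ s, starRingEnd ℂ (c n) * ⟪ψ n, v⟫_ℂ‖ := by
      simp only [v, sum_inner, inner_smul_left]
    _ ≤ ∑ n ∈ s, ‖c n‖ * ‖⟪ψ n, v⟫_ℂ‖ :=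
      (norm_sum_le _ _).trans_eq (by simp only [norm_mul, RCLike.norm_conj])
  have h_bessel : ∑ n ∈ s, ‖⟪ψ n, v⟫_ℂ‖ ^ 2 ≤ B * ‖v‖ ^ 2 :=
    ((hψ v).1.sum_le_tsum s fun _ _ => sq_nonneg _).trans (hψ v).2
  refine le_of_sq_le_mul (by positivity) ?_
  calc (‖v‖ ^ 2) ^ 2 ≤ (∑ n ∈ s, ‖c n‖ * ‖⟪ψ n, v⟫_ℂ‖) ^ 2 :=
        pow_le_pow_left₀ (sq_nonneg _) h_self 2
    _ ≤ (∑ n ∈ s, ‖c n‖ ^ 2) * ∑ n ∈ s, ‖⟪ψ n, v⟫_ℂ‖ ^ 2 := sum_mul_sq_le_sq_mul_sq s _ _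
    _ ≤ (∑ n ∈ s, ‖c n‖ ^ 2) * (B * ‖v‖ ^ 2) := by gcongr
    _ = B * (∑ n ∈ s, ‖c n‖ ^ 2) * ‖v‖ ^ 2 := by ring

lemma summable_smul [CompleteSpace H] (hψ : IsBesselWith ψ B) (hB : 0 < B) {c : ℕ → ℂ}
    (hc : Summable fun n => ‖c n‖ ^ 2) : Summable fun n => c n • ψ n := by
  refine summable_iff_vanishing_norm.2 fun ε hε => ?_
  obtain ⟨s, hs⟩ := summable_iff_vanishing_norm.1 hc (ε ^ 2 / B) (by positivity)
  refine ⟨s, fun t ht => lt_of_pow_lt_pow_left₀ 2 hε.le ?_⟩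
  calc ‖∑ n ∈ t, c n • ψ n‖ ^ 2 ≤ B * ∑ n ∈ t, ‖c n‖ ^ 2 := hψ.norm_sum_smul_sq_le hB.le c t
    _ < B * (ε ^ 2 / B) := by gcongr; exact (Real.le_norm_self _).trans_lt (hs t ht)
    _ = ε ^ 2 := by field_simp

lemma norm_tsum_smul_sq_le (hψ : IsBesselWith ψ B) (hB : 0 ≤ B) {c : ℕ → ℂ}
    (hc : Summable fun n => ‖c n‖ ^ 2) (hs : Summable fun n => c n • ψ n) :
    ‖∑' n, c n • ψ n‖ ^ 2 ≤ B * ∑' n, ‖c n‖ ^ 2 :=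
  le_of_tendsto (hs.hasSum.norm.pow 2) <| Eventually.of_forall fun s =>
    (hψ.norm_sum_smul_sq_le hB c s).trans <| by
      gcongr
      exact hc.sum_le_tsum s fun _ _ => sq_nonneg _

end IsBesselWith

namespace IsRieszBasis

variable {φ : ℕ → H}

lemma summable_smul (hφ : IsRieszBasis φ) {c : ℕ → ℂ} (hc : Summable fun n => ‖c n‖ ^ 2) :
    Summable fun n => c n • φ n :=
  let ⟨_, _, _, _, _, h⟩ := hφ
  (h c hc).1

lemma coeff_injective (hφ : IsRieszBasis φ) {a b : ℕ → ℂ} (ha : Summable fun n => ‖a n‖ ^ 2)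
    (hb : Summable fun n => ‖b n‖ ^ 2) (h : ∑' n, a n • φ n = ∑' n, b n • φ n) : a = b := by
  obtain ⟨-, A, _, hA, -, hφ⟩ := hφ
  have hab := ha.sq_norm_sub hb
  have h_zero : ∑' n, (a n - b n) • φ n = 0 := by
    simp only [sub_smul]
    rw [(hφ a ha).1.tsum_sub (hφ b hb).1, h, sub_self]
  have h_sum : ∑' n, ‖a n - b n‖ ^ 2 = 0 := by
    have h_low := (hφ _ hab).2.1
    rw [h_zero, norm_zero] at h_low
    exact le_antisymm (by nlinarith) (tsum_nonneg fun _ => sq_nonneg _)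
  have h_terms := (hasSum_zero_iff_of_nonneg fun _ => sq_nonneg _).1 (h_sum ▸ hab.hasSum)
  funext n
  simpa [sub_eq_zero] using congrFun h_terms n

end IsRieszBasis

lemma lower_riesz_bound_of_inner_eq {ψ : ℕ → H} {A : ℝ} (hA : 0 ≤ A)
    (hψ : ∀ h : H, A * ‖h‖ ^ 2 ≤ ∑' n, ‖⟪ψ n, h⟫_ℂ‖ ^ 2) {c : ℕ → ℂ} (hs : Summable fun n => c n • ψ n) {f : H}
    (hf : ∀ n, ⟪ψ n, f⟫_ℂ = c n) :
    A * ∑' n, ‖c n‖ ^ 2 ≤ ‖∑' n, c n • ψ n‖ ^ 2 := by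
  set S := ∑' n, ‖c n‖ ^ 2
  set g := ∑' n, c n • ψ n
  have h_inner : ⟪f, g⟫_ℂ = (S : ℂ) := by
    rw [← innerSL_apply_apply, (innerSL ℂ f).map_tsum hs, Complex.ofReal_tsum]
    refine tsum_congr fun n => ?_
    rw [innerSL_apply_apply, inner_smul_right, ← inner_conj_symm, hf, RCLike.mul_conj]
    norm_cast
  have hS : 0 ≤ S := tsum_nonneg fun _ => sq_nonneg _
  have h_cs : S ≤ ‖f‖ * ‖g‖ := by
    simpa [h_inner, abs_of_nonneg hS] using norm_inner_le_norm (𝕜 := ℂ) f g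
  have h_frame : A * ‖f‖ ^ 2 ≤ S := by simpa only [hf] using hψ f
  refine le_of_sq_le_mul (sq_nonneg _) ?_
  calc (A * S) ^ 2 = A * (A * S ^ 2) := by ring
    _ ≤ A * (A * (‖f‖ ^ 2 * ‖g‖ ^ 2)) := by
      gcongr
      simpa only [mul_pow] using pow_le_pow_left₀ hS h_cs 2
    _ = A * ((A * ‖f‖ ^ 2) * ‖g‖ ^ 2) := by ring
    _ ≤ A * (S * ‖g‖ ^ 2) := by gcongr
    _ = ‖g‖ ^ 2 * (A * S) := by ring

namespace IsFrame

variable {ψ : ℕ → H}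

lemma exists_isBesselWith (hψ : IsFrame ψ) : ∃ B, 0 < B ∧ IsBesselWith ψ B :=
  let ⟨_, B, _, hB, h⟩ := hψ
  ⟨B, hB, fun f => ⟨(h f).1, (h f).2.2⟩⟩

lemma eq_zero_of_forall_inner_eq_zero (hψ : IsFrame ψ) {f : H} (hf : ∀ n, ⟪ψ n, f⟫_ℂ = 0) :
    f = 0 := by
  obtain ⟨A, _, hA, -, h⟩ := hψ
  have h_low := (h f).2.1
  simp only [hf, norm_zero, ne_eq, OfNat.ofNat_ne_zero, not_false_eq_true, zero_pow,
    tsum_zero] at h_low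
  by_contra hf0
  linarith [mul_pos hA (pow_pos (norm_pos_iff.2 hf0) 2)]

lemma dense_span [CompleteSpace H] (hψ : IsFrame ψ) :
    Dense (Submodule.span ℂ (Set.range ψ) : Set H) := by
  rw [Submodule.dense_iff_topologicalClosure_eq_top, Submodule.topologicalClosure_eq_top_iff,
    Submodule.eq_bot_iff]
  exact fun f hf => hψ.eq_zero_of_forall_inner_eq_zero fun n =>
    (Submodule.mem_orthogonal _ f).1 hf (ψ n) (Submodule.subset_span (Set.mem_range_self n))

theorem isRieszBasis_of_forall_exists_inner_eq [CompleteSpace H] (hψ : IsFrame ψ)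
    (h : ∀ c : ℕ → ℂ, Summable (fun n => ‖c n‖ ^ 2) → ∃ f : H, ∀ n, ⟪ψ n, f⟫_ℂ = c n) :
    IsRieszBasis ψ := by
  have h_dense := hψ.dense_span
  obtain ⟨B, hB, h_bessel⟩ := hψ.exists_isBesselWith
  obtain ⟨A, _, hA, -, h_frame⟩ := hψ
  refine ⟨h_dense, A, B, hA, hB, fun c hc => ?_⟩
  have hs := h_bessel.summable_smul hB hc
  obtain ⟨f, hf⟩ := h c hc
  exact ⟨hs, lower_riesz_bound_of_inner_eq hA.le (fun h => (h_frame h).2.1) hs hf,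
    h_bessel.norm_tsum_smul_sq_le hB.le hc hs⟩

end IsFrame

end Frames

/-- If Φ is a Riesz basis, Ψ is an overcomplete frame (a frame that is not a
Riesz basis) and m is semi-normalized, then M_{m,Φ,Ψ} (unconditionally convergent for every
f) is injective but not surjective. -/
theorem stmt_11
    {H : Type*} [NormedAddCommGroup H] [InnerProductSpace ℂ H] [CompleteSpace H]
    (φ ψ : ℕ → H) (m : ℕ → ℂ)
    (hΦ : IsRieszBasis φ)
    (hΨ : IsFrame ψ) (hΨ' : ¬ IsRieszBasis ψ)
    (hm : ∃ a b : ℝ, 0 < a ∧ (∀ n, a ≤ ‖m n‖) ∧ (∀ n, ‖m n‖ ≤ b)) :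
    (∀ f : H, Summable (fun n => (m n * (inner ℂ (ψ n) f : ℂ)) • φ n)) ∧
    Function.Injective (fun f : H => ∑' n, (m n * (inner ℂ (ψ n) f : ℂ)) • φ n) ∧
    ¬ Function.Surjective (fun f : H => ∑' n, (m n * (inner ℂ (ψ n) f : ℂ)) • φ n) := by
  obtain ⟨a, b, ha, ham, hbm⟩ := hm
  have hm0 : ∀ n, m n ≠ 0 := fun n h => by simpa [h] using ha.trans_le (ham n)
  obtain ⟨B, -, h_bessel⟩ := hΨ.exists_isBesselWith
  have h_coeff (f : H) : Summable fun n => ‖m n * ⟪ψ n, f⟫_ℂ‖ ^ 2 :=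
    Summable.sq_norm_mul_of_norm_le hbm (h_bessel f).1
  have h_inner_eq {f : H} {c : ℕ → ℂ} (hc : Summable fun n => ‖c n‖ ^ 2)
      (h : ∑' n, (m n * ⟪ψ n, f⟫_ℂ) • φ n = ∑' n, (m n * c n) • φ n) (n : ℕ) :
      ⟪ψ n, f⟫_ℂ = c n :=
    mul_left_cancel₀ (hm0 n)
      (congrFun (hΦ.coeff_injective (h_coeff f) (Summable.sq_norm_mul_of_norm_le hbm hc) h) n)
  refine ⟨fun f => hΦ.summable_smul (h_coeff f), fun f g hfg => ?_, fun hsurj => hΨ' ?_⟩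
  · have hfg' := h_inner_eq (h_bessel g).1 hfg
    refine sub_eq_zero.1 (hΨ.eq_zero_of_forall_inner_eq_zero fun n => ?_)
    rw [inner_sub_right, hfg', sub_self]
  · refine hΨ.isRieszBasis_of_forall_exists_inner_eq fun c hc => ?_
    obtain ⟨f, hf⟩ := hsurj (∑' n, (m n * c n) • φ n)
    exact ⟨f, h_inner_eq hc hf⟩
end
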